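/- Let (Q, Σ) be a DFA with |Q| = n. If Alice has a winning strategy in the synchronization game on (Q, Σ) starting from a position {q, q'} consisting of two distinct states, then she can win from that position making at most n(n−1)/2 moves. -/

import Mathlib

/-- Apply a word (list of letters) to a state of a DFA with transition function `δ`. -/
def applyWord {Q A : Type*} (δ : Q → A → Q) (q : Q) : List A → Q
  | [] => q
  | a :: w => applyWord δ (δ q a) w

/-- The history (list) of letters played after `n` moves of the synchronization game,
when Alice uses strategy `σA` and Bob uses strategy `σB`; Alice moves first, i.e.
the letters at even indices are chosen by Alice and those at odd indices by Bob. -/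
def playHist {A : Type*} (σA σB : List A → A) : ℕ → List A
  | 0 => []
  | n + 1 =>
      let h := playHist σA σB n
      h ++ [if n % 2 = 0 then σA h else σB h]

/-- `w` synchronizes the position `P` (a set of states holding coins) to a single state. -/
def IsResetFrom {Q A : Type*} [DecidableEq Q] (δ : Q → A → Q) (P : Finset Q)
    (w : List A) : Prop :=
  (P.image fun q => applyWord δ q w).card = 1

/-- Alice has a winning strategy in the synchronization game starting from position `P`. -/
def AliceWins {Q A : Type*} [DecidableEq Q] (δ : Q → A → Q) (P : Finset Q) : Prop :=
  ∃ σA : List A → A, ∀ σB : List A → A, ∃ k : ℕ,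
    IsResetFrom δ P (playHist σA σB k)

/-- Alice has a strategy in the synchronization game starting from position `P` that
guarantees reaching a singleton position in a play in which Alice has chosen at most
`m` letters (after `k` letters in total, Alice has chosen `(k + 1) / 2` of them). -/
def AliceWinsWithin {Q A : Type*} [DecidableEq Q] (δ : Q → A → Q) (P : Finset Q)
    (m : ℕ) : Prop :=
  ∃ σA : List A → A, ∀ σB : List A → A, ∃ k : ℕ,
    IsResetFrom δ P (playHist σA σB k) ∧ (k + 1) / 2 ≤ m

/-- Bob has a winning strategy in the synchronization game starting from position `P`:
against every strategy of Alice the position never becomes a singleton. -/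
def BobWins {Q A : Type*} [DecidableEq Q] (δ : Q → A → Q) (P : Finset Q) : Prop :=
  ∃ σB : List A → A, ∀ σA : List A → A, ∀ k : ℕ,
    ¬ IsResetFrom δ P (playHist σA σB k)


/-!
Let `W m` be the set of positions from which Alice can force a singleton within `m` of her
moves. Starting from a pair, every position is a pair or a singleton, and the sets of pairs in
`W 0 ⊆ W 1 ⊆ ⋯` form a chain in the `n(n-1)/2` pairs, so it stalls at some `m ≤ n(n-1)/2`.
Once `W (m+1)` and `W m` contain the same pairs, Bob can answer every letter of Alice from a pair
outside `W m` so as to land on a pair outside `W m` again; so a pair Alice wins from at all lies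
in `W m`.
-/

open Finset

theorem exists_le_card_succ_subset_of_monotone {α : Type*} {S : ℕ → Finset α} {U : Finset α}
    (hS : Monotone S) (hU : ∀ m, S m ⊆ U) : ∃ m ≤ #U, S (m + 1) ⊆ S m := by
  by_contra! hgrowing
  have hcard : ∀ m ≤ #U + 1, m ≤ #(S m) := by
    intro m
    induction m with
    | zero => simp
    | succ m ih =>
      intro hm
      have hlt : #(S m) < #(S (m + 1)) :=
        card_lt_card ⟨hS m.le_succ, hgrowing m (by omega)⟩
      have := ih (by omega)
      omega
  have := (hcard _ le_rfl).trans (card_le_card (hU _))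
  omega

section Game

variable {Q A : Type*} (δ : Q → A → Q)

theorem applyWord_append (q : Q) (u v : List A) :
    applyWord δ q (u ++ v) = applyWord δ (applyWord δ q u) v := by
  induction u generalizing q with
  | nil => rfl
  | cons a u ih => exact ih (δ q a)

theorem playHist_even_succ (σA σB : List A → A) (j : ℕ) :
    playHist σA σB (2 * j + 1) = playHist σA σB (2 * j) ++ [σA (playHist σA σB (2 * j))] := by
  simp [playHist]

theorem playHist_odd_succ (σA σB : List A → A) (j : ℕ) :
    playHist σA σB (2 * j + 2) =
      playHist σA σB (2 * j + 1) ++ [σB (playHist σA σB (2 * j + 1))] := by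
  simp [playHist, Nat.add_mod]

theorem playHist_add_two (σA σB : List A → A) (n : ℕ) :
    playHist σA σB (n + 2) =
      σA [] :: σB [σA []] ::
        playHist (fun h => σA (σA [] :: σB [σA []] :: h))
          (fun h => σB (σA [] :: σB [σA []] :: h)) n := by
  induction n with
  | zero => simp [playHist]
  | succ n ih =>
    rw [playHist, ih, playHist]
    simp [Nat.add_mod_right]

def openWith (a : A) (F : A → List A → A) : List A → A
  | _ :: b :: h => F b h
  | _ => a

variable [DecidableEq Q]

def position (P : Finset Q) (w : List A) : Finset Q :=
  P.image fun q => applyWord δ q w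

theorem isResetFrom_iff_card_position (P : Finset Q) (w : List A) :
    IsResetFrom δ P w ↔ #(position δ P w) = 1 :=
  Iff.rfl

theorem position_nil (P : Finset Q) : position δ P [] = P := by
  simp [position, applyWord]

theorem position_append (P : Finset Q) (u v : List A) :
    position δ P (u ++ v) = position δ (position δ P u) v := by
  simp [position, image_image, Function.comp_def, applyWord_append]

theorem card_position_le (P : Finset Q) (w : List A) : #(position δ P w) ≤ #P :=
  card_image_le

theorem card_position_pos {P : Finset Q} (hP : 0 < #P) (w : List A) :
    0 < #(position δ P w) :=
  card_pos.2 ((card_pos.1 hP).image _)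

/-- Strategy-free form of `AliceWinsWithin`: the `m`-th attractor of the singletons. -/
def WinsIn : ℕ → Finset Q → Prop
  | 0, P => #P = 1
  | m + 1, P =>
    #P = 1 ∨ ∃ a, #(position δ P [a]) = 1 ∨ ∀ b, WinsIn m (position δ P [a, b])

variable {δ}

theorem WinsIn.of_card_eq_one {m : ℕ} {P : Finset Q} (hP : #P = 1) : WinsIn δ m P := by
  cases m with
  | zero => exact hP
  | succ m => exact Or.inl hP

theorem WinsIn.succ {m : ℕ} {P : Finset Q} (h : WinsIn δ m P) : WinsIn δ (m + 1) P := by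
  induction m generalizing P with
  | zero => exact Or.inl h
  | succ m ih =>
    rcases h with hP | ⟨a, ha | hab⟩
    · exact Or.inl hP
    · exact Or.inr ⟨a, Or.inl ha⟩
    · exact Or.inr ⟨a, Or.inr fun b => ih (hab b)⟩

theorem WinsIn.monotone (P : Finset Q) : Monotone fun m => WinsIn δ m P :=
  monotone_nat_of_le_succ fun _ => WinsIn.succ

theorem WinsIn.mono {m m' : ℕ} {P : Finset Q} (hmm' : m ≤ m') (h : WinsIn δ m P) :
    WinsIn δ m' P :=
  WinsIn.monotone P hmm' h

theorem BobWins.not_aliceWins {P : Finset Q} (hB : BobWins δ P) : ¬AliceWins δ P := by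
  rintro ⟨σA, hσA⟩
  obtain ⟨σB, hσB⟩ := hB
  obtain ⟨k, hk⟩ := hσA σB
  exact hσB σA k hk

theorem exists_le_winsIn_stable [Fintype Q] :
    ∃ m ≤ Fintype.card Q * (Fintype.card Q - 1) / 2,
      ∀ R : Finset Q, #R = 2 → WinsIn δ (m + 1) R → WinsIn δ m R := by
  classical
  obtain ⟨m, hm, hstalls⟩ := exists_le_card_succ_subset_of_monotone
    (S := fun m => (univ.powersetCard 2).filter (WinsIn δ m))
    (fun _ _ hmm' => monotone_filter_right _ fun R _ => WinsIn.mono hmm')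
    (fun _ => filter_subset _ _)
  refine ⟨m, ?_, fun R hR hwin => ?_⟩
  · rwa [card_powersetCard, card_univ, Nat.choose_two_right] at hm
  · exact (mem_filter.1 (hstalls (mem_filter.2 ⟨mem_powersetCard.2 ⟨subset_univ R, hR⟩, hwin⟩))).2

variable [Nonempty A]

theorem aliceWinsWithin_of_card_eq_one {P : Finset Q} (hP : #P = 1) (m : ℕ) :
    AliceWinsWithin δ P m :=
  ⟨fun _ => Classical.arbitrary A, fun _ =>
    ⟨0, by simpa [IsResetFrom, playHist, applyWord] using hP, by simp⟩⟩

theorem aliceWinsWithin_of_winsIn {m : ℕ} {P : Finset Q} (h : WinsIn δ m P) :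
    AliceWinsWithin δ P m := by
  induction m generalizing P with
  | zero => exact aliceWinsWithin_of_card_eq_one h 0
  | succ m ih =>
    rcases h with hP | ⟨a, ha | hab⟩
    · exact aliceWinsWithin_of_card_eq_one hP _
    · refine ⟨fun _ => a, fun _ => ⟨1, ?_, by simp⟩⟩
      rw [isResetFrom_iff_card_position]
      simpa [playHist] using ha
    · choose F hF using fun b => ih (hab b)
      refine ⟨openWith a F, fun σB => ?_⟩
      obtain ⟨k, hk, hkm⟩ := hF (σB [a]) fun h => σB (a :: σB [a] :: h)
      refine ⟨k + 2, ?_, by omega⟩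
      rw [playHist_add_two, isResetFrom_iff_card_position]
      change #(position δ P ([a, σB [a]] ++ playHist (F (σB [a])) _ k)) = 1
      rw [position_append]
      exact hk

theorem bobWins_of_trap (B : Set (Finset Q))
    (hB : ∀ R ∈ B, #R ≠ 1 ∧ ∀ a, #(position δ R [a]) ≠ 1 ∧ ∃ b, position δ R [a, b] ∈ B)
    {P : Finset Q} (hP : P ∈ B) : BobWins δ P := by
  classical
  let σB : List A → A := fun h =>
    if hb : ∃ b, position δ P (h ++ [b]) ∈ B then hb.choose else Classical.arbitrary A
  refine ⟨σB, fun σA => ?_⟩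
  have htrapped : ∀ j, position δ P (playHist σA σB (2 * j)) ∈ B := by
    intro j
    induction j with
    | zero => simpa [playHist, position_nil] using hP
    | succ j ih =>
      set h := playHist σA σB (2 * j)
      have hreply : ∃ b, position δ P ((h ++ [σA h]) ++ [b]) ∈ B := by
        obtain ⟨b, hb⟩ := ((hB _ ih).2 (σA h)).2
        exact ⟨b, by rwa [List.append_assoc, position_append]⟩
      rw [Nat.mul_succ, playHist_odd_succ, playHist_even_succ]
      convert hreply.choose_spec
      exact dif_pos hreply
  intro k
  rw [isResetFrom_iff_card_position]
  obtain ⟨j, rfl | rfl⟩ := Nat.even_or_odd' k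
  · exact (hB _ (htrapped j)).1
  · rw [playHist_even_succ, position_append]
    exact ((hB _ (htrapped j)).2 _).1

theorem bobWins_of_not_winsIn {m : ℕ}
    (hstable : ∀ R : Finset Q, #R = 2 → WinsIn δ (m + 1) R → WinsIn δ m R)
    {P : Finset Q} (hP : #P = 2) (hlose : ¬WinsIn δ m P) : BobWins δ P := by
  refine bobWins_of_trap {R | #R = 2 ∧ ¬WinsIn δ m R} ?_ ⟨hP, hlose⟩
  rintro R ⟨hR, hRlose⟩
  refine ⟨by omega, fun a => ?_⟩
  have hRlose' : ¬WinsIn δ (m + 1) R := fun h => hRlose (hstable R hR h)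
  simp only [WinsIn, not_or, not_exists, not_forall] at hRlose'
  obtain ⟨hnot1, b, hb⟩ := hRlose'.2 a
  refine ⟨hnot1, b, ?_, hb⟩
  have hle := card_position_le δ R [a, b]
  have hpos := card_position_pos δ (hR ▸ two_pos) [a, b]
  have hne : #(position δ R [a, b]) ≠ 1 := fun h => hb (WinsIn.of_card_eq_one h)
  omega

theorem aliceWinsWithin_of_aliceWins_of_card_eq_two [Fintype Q] {P : Finset Q} (hP : #P = 2)
    (h : AliceWins δ P) :
    AliceWinsWithin δ P (Fintype.card Q * (Fintype.card Q - 1) / 2) := by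
  obtain ⟨m, hm, hstable⟩ := exists_le_winsIn_stable (δ := δ)
  have hwin : WinsIn δ m P := by
    by_contra hlose
    exact (bobWins_of_not_winsIn hstable hP hlose).not_aliceWins h
  exact aliceWinsWithin_of_winsIn (hwin.mono hm)

end Game

theorem alice_wins_within_on_pair_general {Q A : Type*} [Fintype Q] [DecidableEq Q]
    (δ : Q → A → Q) (q q' : Q) (hqq : q ≠ q')
    (h : AliceWins δ {q, q'}) :
    AliceWinsWithin δ {q, q'} (Fintype.card Q * (Fintype.card Q - 1) / 2) := by
  have : Nonempty A := h.elim fun σA _ => ⟨σA []⟩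
  exact aliceWinsWithin_of_aliceWins_of_card_eq_two (card_pair hqq) h

/-- If Alice has a winning strategy in the synchronization game starting from a position
`{q, q'}` consisting of two distinct states of an `n`-state DFA, she can win from that
position making at most `n(n-1)/2` moves. -/
theorem alice_wins_within_on_pair {Q A : Type*} [Fintype Q] [DecidableEq Q] [Nonempty A]
    (δ : Q → A → Q) (q q' : Q) (hqq : q ≠ q')
    (h : AliceWins δ {q, q'}) :
    AliceWinsWithin δ {q, q'} (Fintype.card Q * (Fintype.card Q - 1) / 2) :=
  alice_wins_within_on_pair_general δ q q' hqq h
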